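/- With notation as in the previous estimate (s ∈ N^r, d_ℓ, d, and G = G_{s,u} with |u_ℓ|_∞ ≤ q^{s_ℓ q/(q-1)} for ℓ < r): if x = (x_m) ∈ C_∞^d satisfies |x_{d_1 + ··· + d_{ℓ-1} + j}|_∞ < q^{−(d_ℓ − j) + d_ℓ q/(q-1)} for all 1 ≤ ℓ ≤ r and 1 ≤ j ≤ d_ℓ, then |P_i x^{(i)}|_∞ → 0 as i → ∞, where x^{(i)} raises each entry to the q^i power; hence log_G(x) = Σ_{i≥0} P_i x^{(i)} converges in C_∞^d. -/

import Mathlib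

/-!
By induction on `i`, `‖P i a ⟨ℓ, j⟩‖ ≤ q ^ (d₁ q/(q-1) + q^i · logExponent ⟨ℓ, j⟩)`. In the
recursion, `E` is supported on the first column of each block and right multiplication by `N ^ n`
moves column `0` to column `n`, so the `m`-th summand only contributes at `n = j ≤ m`; there the
ultrametric norm of `(θ^{q^{i+1}} - θ)^{-(m+1)}`, namely `q^{-q^{i+1}(m+1)}`, absorbs the growth
of `P i` and of the `q^i`-th powers of the entries of `E`. Consequently
`‖P i a b · x_b^{q^i}‖ ≤ q^{d₁ q/(q-1)} (q^{logExponent b} ‖x_b‖)^{q^i}`, and the polydisc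
condition says precisely that each base is `< 1`. In a complete non-archimedean field a series
whose terms tend to `0` converges.
-/

open Filter Topology IsUltrametricDist

theorem Matrix.norm_mul_apply_le_of_forall {l m n F : Type*} [Fintype m] [NormedField F]
    [IsUltrametricDist F] {A : Matrix l m F} {B : Matrix m n F} {a : l} {c : n} {C : ℝ}
    (hC : 0 ≤ C) (h : ∀ b, ‖A a b‖ * ‖B b c‖ ≤ C) : ‖(A * B) a c‖ ≤ C := by
  rw [Matrix.mul_apply]
  exact norm_sum_le_of_forall_le_of_nonneg hC fun b _ => (norm_mul _ _).trans_le (h b)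

theorem norm_pow_sub_self {F : Type*} [NormedField F] [IsUltrametricDist F] {θ : F}
    (hθ : 1 < ‖θ‖) {Q : ℕ} (hQ : 2 ≤ Q) : ‖θ ^ Q - θ‖ = ‖θ‖ ^ Q := by
  have hlt : ‖θ‖ < ‖θ ^ Q‖ := by
    rw [norm_pow]
    exact lt_self_pow₀ hθ (by omega)
  rw [sub_eq_add_neg, norm_add_eq_max_of_norm_ne_norm (by rw [norm_neg]; exact hlt.ne'),
    norm_neg, max_eq_left hlt.le, norm_pow]

theorem norm_prod_le_rpow_sum {ι F : Type*} [NormedField F] {c : ℝ} (hc : 0 < c)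
    {t : Finset ι} {u : ι → F} {f : ι → ℝ} (hu : ∀ e ∈ t, ‖u e‖ ≤ c ^ f e) :
    ‖∏ e ∈ t, u e‖ ≤ c ^ ∑ e ∈ t, f e := by
  rw [norm_prod, Real.rpow_sum_of_pos hc]
  exact Finset.prod_le_prod (fun e _ => norm_nonneg _) hu

theorem tendsto_norm_mulVec_pow_nhds_zero {ι F : Type*} [Fintype ι] [NormedField F]
    {P : ℕ → Matrix ι ι F} {x : ι → F} {Q : ℕ → ℕ} (hQ : Tendsto Q atTop atTop) {K : ℝ}
    {t : ι → ℝ} (ht0 : ∀ b, 0 ≤ t b) (ht1 : ∀ b, t b < 1)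
    (hP : ∀ i a b, ‖P i a b‖ * ‖x b‖ ^ Q i ≤ K * t b ^ Q i) (a : ι) :
    Tendsto (fun i => ‖(P i).mulVec (fun b => x b ^ Q i) a‖) atTop (𝓝 0) := by
  have hlim : Tendsto (fun i => ∑ b, K * t b ^ Q i) atTop (𝓝 0) := by
    simpa using tendsto_finsetSum Finset.univ fun b _ =>
      ((tendsto_pow_atTop_nhds_zero_of_lt_one (ht0 b) (ht1 b)).comp hQ).const_mul K
  refine squeeze_zero (fun _ => norm_nonneg _) (fun i => ?_) hlim
  calc ‖(P i).mulVec (fun b => x b ^ Q i) a‖ ≤ ∑ b, ‖P i a b * x b ^ Q i‖ := norm_sum_le _ _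
    _ ≤ _ := Finset.sum_le_sum fun b _ => by rw [norm_mul, norm_pow]; exact hP i a b

theorem rpow_mul_lt_one_of_lt_rpow_neg {c w y : ℝ} (hc : 0 < c) (h : y < c ^ (-w)) :
    c ^ w * y < 1 := by
  rw [Real.rpow_neg hc.le] at h
  have hpos : 0 < c ^ w := by positivity
  calc c ^ w * y < c ^ w * (c ^ w)⁻¹ := by gcongr
    _ = 1 := mul_inv_cancel₀ hpos.ne'

theorem rpow_add_natCast_mul_mul_pow {c : ℝ} (hc : 0 < c) (C w y : ℝ) (Q : ℕ) :
    c ^ (C + Q * w) * y ^ Q = c ^ C * (c ^ w * y) ^ Q := by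
  rw [Real.rpow_add hc, mul_pow, mul_comm (Q : ℝ), Real.rpow_mul_natCast hc.le, mul_assoc]

section BlockShift

variable {α R : Type*} [DecidableEq α] [Semiring R] {n : α → ℕ}

def blockShift (n : α → ℕ) : Matrix (Σ a, Fin (n a)) (Σ a, Fin (n a)) R :=
  Matrix.of fun x y => if x.1 = y.1 ∧ (y.2 : ℕ) = x.2 + 1 then 1 else 0

variable [Fintype α]

theorem blockShift_pow_apply (k : ℕ) (x y : Σ a, Fin (n a)) :
    (blockShift n ^ k : Matrix _ _ R) x y =
      if x.1 = y.1 ∧ (y.2 : ℕ) = x.2 + k then 1 else 0 := by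
  induction k generalizing y with
  | zero =>
    obtain ⟨a, i⟩ := x
    obtain ⟨b, j⟩ := y
    rw [pow_zero, Matrix.one_apply]
    by_cases hab : a = b
    · subst hab
      simp [Fin.ext_iff, eq_comm]
    · simp [hab]
  | succ k ih =>
    obtain ⟨a, i⟩ := x
    rw [pow_succ, Matrix.mul_apply]
    by_cases hk : (i : ℕ) + k < n a
    · rw [Finset.sum_eq_single ⟨a, ⟨i + k, hk⟩⟩ _ (by simp), ih, blockShift, Matrix.of_apply]
      · simp [add_assoc]
      · rintro ⟨b, j⟩ - hz
        rw [ih, if_neg, zero_mul]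
        rintro ⟨rfl, hj⟩
        exact hz (Sigma.ext rfl (heq_of_eq (Fin.ext hj)))
    · rw [if_neg, Finset.sum_eq_zero]
      · rintro ⟨b, j⟩ -
        rw [ih, if_neg, zero_mul]
        rintro ⟨rfl, hj⟩
        exact hk (hj ▸ j.isLt)
      · obtain ⟨b, j⟩ := y
        rintro ⟨rfl, hj⟩
        have := j.isLt
        simp only at hj
        omega

theorem norm_blockShift_pow_apply_le_one {F : Type*} [NormedField F] (k : ℕ)
    (x y : Σ a, Fin (n a)) : ‖(blockShift n ^ k : Matrix _ _ F) x y‖ ≤ 1 := by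
  rw [blockShift_pow_apply]
  split <;> simp

theorem mul_blockShift_pow_apply {m : Type*} {M : Matrix m (Σ a, Fin (n a)) R}
    (hM : ∀ a z, (z.2 : ℕ) ≠ 0 → M a z = 0) (k : ℕ) (a : m) (ℓ : α) (j : Fin (n ℓ)) :
    (M * (blockShift n ^ k : Matrix (Σ a, Fin (n a)) (Σ a, Fin (n a)) R)) a ⟨ℓ, j⟩ =
      if k = j then M a ⟨ℓ, ⟨0, j.pos⟩⟩ else 0 := by
  rw [Matrix.mul_apply, Finset.sum_eq_single ⟨ℓ, ⟨0, j.pos⟩⟩ _ (by simp), blockShift_pow_apply]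
  · simp [eq_comm]
  · rintro ⟨b, i⟩ - hz
    by_cases hi : (i : ℕ) = 0
    · rw [blockShift_pow_apply, if_neg, mul_zero]
      rintro ⟨rfl, -⟩
      exact hz (Sigma.ext rfl (heq_of_eq (Fin.ext hi)))
    · rw [hM _ _ hi, zero_mul]

theorem norm_blockShift_pow_mul_apply_le {F m : Type*} [NormedField F] [IsUltrametricDist F]
    {M : Matrix (Σ a, Fin (n a)) m F} {C : ℝ} (hC : 0 ≤ C) {z : m} (hM : ∀ w, ‖M w z‖ ≤ C)
    (k : ℕ) (x : Σ a, Fin (n a)) :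
    ‖((blockShift n ^ k : Matrix (Σ a, Fin (n a)) (Σ a, Fin (n a)) F) * M) x z‖ ≤ C :=
  Matrix.norm_mul_apply_le_of_forall hC fun w =>
    (mul_le_of_le_one_left (norm_nonneg _) (norm_blockShift_pow_apply_le_one k x w)).trans (hM w)

end BlockShift

section LogCoefficients

variable {F : Type*} [NormedField F] {q r : ℕ} {dl : ℕ → ℕ}

/-- For `b = ⟨ℓ, j⟩` this is the paper's `(d_ℓ - j) - d_ℓ q/(q-1)`, whose `j` is 1-based. -/
noncomputable def logExponent (q : ℕ) (dl : ℕ → ℕ) (b : (l : Fin r) × Fin (dl l.val)) : ℝ :=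
  (dl b.1.val : ℝ) - ((b.2 : ℕ) + 1) - (dl b.1.val : ℝ) * q / ((q : ℝ) - 1)

theorem last_row_first_col_of_E_apply_ne_zero {u : ℕ → F}
    {E : Matrix ((l : Fin r) × Fin (dl l.val)) ((l : Fin r) × Fin (dl l.val)) F}
    (hE : ∀ x y, E x y =
      if (x.2 : ℕ) = dl x.1.val - 1 ∧ (y.2 : ℕ) = 0 ∧ x.1 ≤ y.1 then
        (-1 : F) ^ ((y.1 : ℕ) - (x.1 : ℕ)) * ∏ e ∈ Finset.Ico (x.1 : ℕ) (y.1 : ℕ), u e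
      else 0)
    {y z : (l : Fin r) × Fin (dl l.val)} (hyz : E y z ≠ 0) :
    (y.2 : ℕ) + 1 = dl y.1.val ∧ (z.2 : ℕ) = 0 := by
  rw [hE] at hyz
  obtain ⟨hy, hz, -⟩ := (ite_ne_right_iff.mp hyz).1
  exact ⟨by have := y.2.isLt; omega, hz⟩

theorem norm_E_apply_le (hq : 0 < q) {s : ℕ → ℕ} {u : ℕ → F}
    (hu : ∀ e, e + 1 < r → ‖u e‖ ≤ (q : ℝ) ^ ((s e : ℝ) * q / ((q : ℝ) - 1)))
    (hdl : ∀ l, dl l = ∑ e ∈ Finset.Ico l r, s e)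
    {E : Matrix ((l : Fin r) × Fin (dl l.val)) ((l : Fin r) × Fin (dl l.val)) F}
    (hE : ∀ x y, E x y =
      if (x.2 : ℕ) = dl x.1.val - 1 ∧ (y.2 : ℕ) = 0 ∧ x.1 ≤ y.1 then
        (-1 : F) ^ ((y.1 : ℕ) - (x.1 : ℕ)) * ∏ e ∈ Finset.Ico (x.1 : ℕ) (y.1 : ℕ), u e
      else 0)
    (y z : (l : Fin r) × Fin (dl l.val)) :
    ‖E y z‖ ≤ (q : ℝ) ^ (((dl y.1.val : ℝ) - dl z.1.val) * q / ((q : ℝ) - 1)) := by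
  rw [hE]
  split_ifs with h
  · have hsplit : dl y.1.val = (∑ e ∈ Finset.Ico (y.1 : ℕ) z.1, s e) + dl z.1.val := by
      rw [hdl, hdl, Finset.sum_Ico_consecutive _ h.2.2 z.1.isLt.le]
    have hexp : ((dl y.1.val : ℝ) - dl z.1.val) * q / ((q : ℝ) - 1) =
        ∑ e ∈ Finset.Ico (y.1 : ℕ) z.1, (s e : ℝ) * q / ((q : ℝ) - 1) := by
      rw [hsplit, ← Finset.sum_div, ← Finset.sum_mul]
      push_cast
      ring
    rw [norm_mul, norm_pow, norm_neg, norm_one, one_pow, one_mul, hexp]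
    refine norm_prod_le_rpow_sum (by exact_mod_cast hq) fun e he => hu e ?_
    have := (Finset.mem_Ico.mp he).2
    omega
  · rw [norm_zero]
    positivity

theorem norm_mul_map_pow_apply_le [IsUltrametricDist F] (hq : 0 < q) {C : ℝ} {Q : ℕ}
    (hQ : Q ≠ 0)
    {P E : Matrix ((l : Fin r) × Fin (dl l.val)) ((l : Fin r) × Fin (dl l.val)) F}
    (hEsupp : ∀ y z, E y z ≠ 0 → (y.2 : ℕ) + 1 = dl y.1.val)
    (hEnorm : ∀ y z, ‖E y z‖ ≤ (q : ℝ) ^ (((dl y.1.val : ℝ) - dl z.1.val) * q / ((q : ℝ) - 1)))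
    (hP : ∀ w y, ‖P w y‖ ≤ (q : ℝ) ^ (C + Q * logExponent q dl y))
    (w z : (l : Fin r) × Fin (dl l.val)) :
    ‖(P * E.map (· ^ Q)) w z‖ ≤ (q : ℝ) ^ (C - Q * ((dl z.1.val : ℝ) * q / ((q : ℝ) - 1))) := by
  have hq' : (0 : ℝ) < q := by exact_mod_cast hq
  refine Matrix.norm_mul_apply_le_of_forall (by positivity) fun y => ?_
  by_cases hy : E y z = 0
  · simp only [hy, Matrix.map_apply, zero_pow hQ, norm_zero, mul_zero]
    positivity
  · have hlast : ((y.2 : ℕ) : ℝ) + 1 = dl y.1.val := by exact_mod_cast hEsupp y z hy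
    calc ‖P w y‖ * ‖(E.map (· ^ Q)) y z‖
        ≤ (q : ℝ) ^ (C + Q * logExponent q dl y) *
            ((q : ℝ) ^ (((dl y.1.val : ℝ) - dl z.1.val) * q / ((q : ℝ) - 1))) ^ Q := by
          rw [Matrix.map_apply, norm_pow]
          gcongr
          exacts [hP w y, hEnorm y z]
      _ = _ := by
          rw [← Real.rpow_natCast _ Q, ← Real.rpow_mul hq'.le, ← Real.rpow_add hq',
            logExponent, ← hlast]
          congr 1
          ring

theorem norm_inv_pow_pow_sub_self_le [IsUltrametricDist F] (hq : 1 < q) {θ : F}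
    (hθ : ‖θ‖ = q) {Q : ℕ} (hQ : 2 ≤ Q) {j m : ℕ} (hjm : j ≤ m) :
    ‖((θ ^ Q - θ) ^ (m + 1))⁻¹‖ ≤ (q : ℝ) ^ (-((Q : ℝ) * (j + 1))) := by
  have hq' : (1 : ℝ) < q := by exact_mod_cast hq
  rw [norm_inv, norm_pow, norm_pow_sub_self (hθ ▸ hq') hQ, hθ, ← pow_mul, Real.rpow_neg
    (by positivity), ← Real.rpow_natCast]
  gcongr
  · exact hq'.le
  · push_cast
    gcongr

-- `q/(q-1)` is the solution `κ` of `q (1 - κ) = -κ`.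
theorem pow_succ_mul_logExponent (hq : 1 < q) (i : ℕ) (ℓ : Fin r) (j : Fin (dl ℓ.val)) :
    (q : ℝ) ^ (i + 1) * logExponent q dl ⟨ℓ, j⟩ =
      -((q : ℝ) ^ (i + 1) * ((j : ℕ) + 1)) -
        (q : ℝ) ^ i * ((dl ℓ.val : ℝ) * q / ((q : ℝ) - 1)) := by
  have hq1 : (q : ℝ) - 1 ≠ 0 := by
    have : (1 : ℝ) < q := by exact_mod_cast hq
    linarith
  rw [logExponent]
  field_simp
  ring

theorem norm_logCoeff_succ_le [IsUltrametricDist F] (hq : 1 < q) {θ : F} (hθ : ‖θ‖ = q)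
    {N E P P' : Matrix ((l : Fin r) × Fin (dl l.val)) ((l : Fin r) × Fin (dl l.val)) F}
    (hN : N = blockShift fun l : Fin r => dl l.val)
    (hEsupp : ∀ y z, E y z ≠ 0 → (y.2 : ℕ) + 1 = dl y.1.val ∧ (z.2 : ℕ) = 0)
    (hEnorm : ∀ y z, ‖E y z‖ ≤ (q : ℝ) ^ (((dl y.1.val : ℝ) - dl z.1.val) * q / ((q : ℝ) - 1)))
    {C : ℝ} {i : ℕ} (hP : ∀ a b, ‖P a b‖ ≤ (q : ℝ) ^ (C + (q : ℝ) ^ i * logExponent q dl b))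
    (K : ℕ) (hP' : P' = - ∑ m ∈ Finset.range K,
      ((θ ^ q ^ (i + 1) - θ) ^ (m + 1))⁻¹ •
        ∑ n ∈ Finset.range (m + 1), ((-1 : F) ^ n * (Nat.choose m n : F)) •
          (N ^ (m - n) * P * (E.map fun z => z ^ q ^ i) * N ^ n))
    (a b : (l : Fin r) × Fin (dl l.val)) :
    ‖P' a b‖ ≤ (q : ℝ) ^ (C + (q : ℝ) ^ (i + 1) * logExponent q dl b) := by
  obtain ⟨ℓ, j⟩ := b
  have hq0 : 0 < q := by omega
  have hQ : q ^ i ≠ 0 := pow_ne_zero i hq0.ne'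
  have hMcol : ∀ k a z, (z.2 : ℕ) ≠ 0 → (N ^ k * P * E.map (· ^ q ^ i)) a z = 0 :=
    fun k a z hz => Finset.sum_eq_zero fun y _ => by
      have hyz : E y z = 0 := by_contra fun h => hz (hEsupp y z h).2
      simp [hyz, hq0.ne']
  have hMnorm : ∀ k a z, ‖(N ^ k * P * E.map (· ^ q ^ i)) a z‖ ≤
      (q : ℝ) ^ (C - (q ^ i : ℕ) * ((dl z.1.val : ℝ) * q / ((q : ℝ) - 1))) := by
    intro k a z
    rw [Matrix.mul_assoc, hN]
    refine norm_blockShift_pow_mul_apply_le (by positivity) (fun w => ?_) k a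
    refine norm_mul_map_pow_apply_le hq0 hQ (fun y z h => (hEsupp y z h).1) hEnorm
      (fun w y => ?_) w z
    exact_mod_cast hP w y
  have hP'apply : P' a ⟨ℓ, j⟩ = - ∑ m ∈ Finset.range K, if (j : ℕ) ∈ Finset.range (m + 1) then
      ((θ ^ q ^ (i + 1) - θ) ^ (m + 1))⁻¹ * (((-1 : F) ^ (j : ℕ) * (Nat.choose m j : F)) *
        (N ^ (m - j) * P * E.map (· ^ q ^ i)) a ⟨ℓ, ⟨0, j.pos⟩⟩) else 0 := by
    rw [hN] at hMcol
    simp only [hP', hN, Matrix.neg_apply, Matrix.sum_apply, Matrix.smul_apply, smul_eq_mul,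
      fun k => mul_blockShift_pow_apply (hMcol k), mul_ite, mul_zero, Finset.sum_ite_eq']
  rw [hP'apply, norm_neg]
  refine norm_sum_le_of_forall_le_of_nonneg (by positivity) fun m _ => ?_
  split_ifs with hjm
  · rw [Finset.mem_range, Nat.lt_succ_iff] at hjm
    calc _ ≤ (q : ℝ) ^ (-((q ^ (i + 1) : ℕ) * ((j : ℕ) + 1 : ℝ))) * (1 *
          (q : ℝ) ^ (C - (q ^ i : ℕ) * ((dl ℓ.val : ℝ) * q / ((q : ℝ) - 1)))) := by
          rw [norm_mul, norm_mul]
          gcongr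
          · exact norm_inv_pow_pow_sub_self_le hq hθ
              (le_trans hq (Nat.le_self_pow (by omega) q)) hjm
          · rw [norm_mul, norm_pow, norm_neg, norm_one, one_pow, one_mul]
            exact norm_natCast_le_one F _
          · exact hMnorm _ _ _
      _ = _ := by
          rw [one_mul, ← Real.rpow_add (by positivity), pow_succ_mul_logExponent hq]
          congr 1
          push_cast
          ring
  · rw [norm_zero]
    positivity

theorem norm_logCoeff_le [IsUltrametricDist F] (hq : 1 < q) {θ : F} (hθ : ‖θ‖ = q)
    {s : ℕ → ℕ} {u : ℕ → F}
    (hu : ∀ e, e + 1 < r → ‖u e‖ ≤ (q : ℝ) ^ ((s e : ℝ) * q / ((q : ℝ) - 1)))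
    (hdl : ∀ l, dl l = ∑ e ∈ Finset.Ico l r, s e)
    {N E : Matrix ((l : Fin r) × Fin (dl l.val)) ((l : Fin r) × Fin (dl l.val)) F}
    (hN : ∀ x y, N x y = if x.1 = y.1 ∧ (y.2 : ℕ) = (x.2 : ℕ) + 1 then 1 else 0)
    (hE : ∀ x y, E x y =
      if (x.2 : ℕ) = dl x.1.val - 1 ∧ (y.2 : ℕ) = 0 ∧ x.1 ≤ y.1 then
        (-1 : F) ^ ((y.1 : ℕ) - (x.1 : ℕ)) * ∏ e ∈ Finset.Ico (x.1 : ℕ) (y.1 : ℕ), u e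
      else 0)
    {P : ℕ → Matrix ((l : Fin r) × Fin (dl l.val)) ((l : Fin r) × Fin (dl l.val)) F}
    (hP0 : P 0 = 1)
    (hPrec : ∀ i, P (i + 1) = - ∑ m ∈ Finset.range (2 * dl 0 - 1),
      ((θ ^ q ^ (i + 1) - θ) ^ (m + 1))⁻¹ •
        ∑ n ∈ Finset.range (m + 1), ((-1 : F) ^ n * (Nat.choose m n : F)) •
          (N ^ (m - n) * P i * (E.map fun z => z ^ q ^ i) * N ^ n))
    (i : ℕ) (a b : (l : Fin r) × Fin (dl l.val)) :
    ‖P i a b‖ ≤ (q : ℝ) ^ ((dl 0 : ℝ) * q / ((q : ℝ) - 1) + (q : ℝ) ^ i * logExponent q dl b) := by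
  induction i generalizing a b with
  | zero =>
    have hq' : (1 : ℝ) < q := by exact_mod_cast hq
    have hdl_le : dl b.1.val ≤ dl 0 := by
      rw [hdl, hdl]
      exact Finset.sum_le_sum_of_subset (Finset.Ico_subset_Ico (Nat.zero_le _) le_rfl)
    have hexp : 0 ≤ (dl 0 : ℝ) * q / ((q : ℝ) - 1) + logExponent q dl b := by
      have hj : ((b.2 : ℕ) : ℝ) + 1 ≤ dl b.1.val := by exact_mod_cast b.2.isLt
      have hκ : (dl b.1.val : ℝ) * q / ((q : ℝ) - 1) ≤ (dl 0 : ℝ) * q / ((q : ℝ) - 1) := by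
        gcongr
      rw [logExponent]
      linarith
    rw [hP0, pow_zero, one_mul]
    calc ‖(1 : Matrix _ _ F) a b‖ ≤ 1 := by rw [Matrix.one_apply]; split <;> simp
      _ ≤ _ := Real.one_le_rpow hq'.le hexp
  | succ i ih =>
    exact norm_logCoeff_succ_le hq hθ (Matrix.ext hN)
      (fun y z h => last_row_first_col_of_E_apply_ne_zero hE h)
      (norm_E_apply_le (by omega) hu hdl hE) ih _ (hPrec i) a b

end LogCoefficients

theorem log_converges_on_polydisc_general (F : Type*) [NormedField F] [CompleteSpace F]
    (hna : ∀ x y : F, ‖x + y‖ ≤ max ‖x‖ ‖y‖)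
    (q : ℕ) (hq : 2 ≤ q) (θ : F) (hθ : ‖θ‖ = q)
    (r : ℕ) (s : ℕ → ℕ)
    (u : ℕ → F) (hu : ∀ e, e + 1 < r → ‖u e‖ ≤ (q : ℝ) ^ ((s e : ℝ) * q / ((q : ℝ) - 1)))
    (dl : ℕ → ℕ) (hdl : ∀ l, dl l = ∑ e ∈ Finset.Ico l r, s e)
    (N E : Matrix ((l : Fin r) × Fin (dl l.val)) ((l : Fin r) × Fin (dl l.val)) F)
    (hN : ∀ x y, N x y = if x.1 = y.1 ∧ (y.2 : ℕ) = (x.2 : ℕ) + 1 then 1 else 0)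
    (hE : ∀ x y, E x y =
      if (x.2 : ℕ) = dl x.1.val - 1 ∧ (y.2 : ℕ) = 0 ∧ x.1 ≤ y.1 then
        (-1 : F) ^ ((y.1 : ℕ) - (x.1 : ℕ)) * ∏ e ∈ Finset.Ico (x.1 : ℕ) (y.1 : ℕ), u e
      else 0)
    (P : ℕ → Matrix ((l : Fin r) × Fin (dl l.val)) ((l : Fin r) × Fin (dl l.val)) F)
    (hP0 : P 0 = 1)
    (hPrec : ∀ i, P (i + 1) = - ∑ m ∈ Finset.range (2 * dl 0 - 1),
      ((θ ^ q ^ (i + 1) - θ) ^ (m + 1))⁻¹ •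
        ∑ n ∈ Finset.range (m + 1), ((-1 : F) ^ n * (Nat.choose m n : F)) •
          (N ^ (m - n) * P i * (E.map fun z => z ^ q ^ i) * N ^ n))
    (x : ((l : Fin r) × Fin (dl l.val)) → F)
    (hx : ∀ (l : Fin r) (j : Fin (dl l.val)),
      ‖x ⟨l, j⟩‖ < (q : ℝ) ^ (-((dl l.val : ℝ) - ((j : ℕ) + 1)) +
        (dl l.val : ℝ) * q / ((q : ℝ) - 1))) :
    (∀ a : (l : Fin r) × Fin (dl l.val),
      Filter.Tendsto (fun i : ℕ => ‖((P i).mulVec fun b => x b ^ q ^ i) a‖)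
        Filter.atTop (nhds 0)) ∧
    (∀ a : (l : Fin r) × Fin (dl l.val),
      ∃ S : F, HasSum (fun i : ℕ => ((P i).mulVec fun b => x b ^ q ^ i) a) S) := by
  have := isUltrametricDist_of_isNonarchimedean_norm hna
  have hq0 : (0 : ℝ) < q := by positivity
  have hcoef := norm_logCoeff_le (by omega) hθ hu hdl hN hE hP0 hPrec
  have ht1 : ∀ b, (q : ℝ) ^ logExponent q dl b * ‖x b‖ < 1 := fun ⟨l, j⟩ =>
    rpow_mul_lt_one_of_lt_rpow_neg hq0 (by convert hx l j using 2; rw [logExponent]; ring)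
  have hbound : ∀ i a b, ‖P i a b‖ * ‖x b‖ ^ q ^ i ≤ (q : ℝ) ^ ((dl 0 : ℝ) * q / ((q : ℝ) - 1)) *
      ((q : ℝ) ^ logExponent q dl b * ‖x b‖) ^ q ^ i := fun i a b => by
    rw [← rpow_add_natCast_mul_mul_pow hq0]
    push_cast
    gcongr
    exact hcoef i a b
  have htend := tendsto_norm_mulVec_pow_nhds_zero (tendsto_pow_atTop_atTop_of_one_lt hq)
    (fun b => by positivity) ht1 hbound
  refine ⟨htend, fun a => ⟨_, (NonarchimedeanAddGroup.summable_of_tendsto_cofinite_zero ?_).hasSum⟩⟩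
  rw [Nat.cofinite_eq_atTop]
  exact tendsto_zero_iff_norm_tendsto_zero.mpr (htend a)

/-- Convergence of `log_G` at points in the polydisc: with the same data
as in the coefficient estimate, if the coordinate of `x` in block `ℓ` at (1-based)
position `j` satisfies `|x|_∞ < q^{-(d_ℓ - j) + d_ℓ q/(q-1)}`, then
`|P_i x^{(i)}|_∞ → 0` and `log_G(x) = Σ_i P_i x^{(i)}` converges in `C_∞^d`. -/
theorem log_converges_on_polydisc (F : Type*) [NormedField F] [CompleteSpace F]
    (hna : ∀ x y : F, ‖x + y‖ ≤ max ‖x‖ ‖y‖)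
    (q : ℕ) (hq : 2 ≤ q) (θ : F) (hθ : ‖θ‖ = q)
    (r : ℕ) (hr : 1 ≤ r) (s : ℕ → ℕ) (hs : ∀ e, e < r → 1 ≤ s e)
    (u : ℕ → F) (hu : ∀ e, e + 1 < r → ‖u e‖ ≤ (q : ℝ) ^ ((s e : ℝ) * q / ((q : ℝ) - 1)))
    (dl : ℕ → ℕ) (hdl : ∀ l, dl l = ∑ e ∈ Finset.Ico l r, s e)
    (N E : Matrix ((l : Fin r) × Fin (dl l.val)) ((l : Fin r) × Fin (dl l.val)) F)
    (hN : ∀ x y, N x y = if x.1 = y.1 ∧ (y.2 : ℕ) = (x.2 : ℕ) + 1 then 1 else 0)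
    (hE : ∀ x y, E x y =
      if (x.2 : ℕ) = dl x.1.val - 1 ∧ (y.2 : ℕ) = 0 ∧ x.1 ≤ y.1 then
        (-1 : F) ^ ((y.1 : ℕ) - (x.1 : ℕ)) * ∏ e ∈ Finset.Ico (x.1 : ℕ) (y.1 : ℕ), u e
      else 0)
    (P : ℕ → Matrix ((l : Fin r) × Fin (dl l.val)) ((l : Fin r) × Fin (dl l.val)) F)
    (hP0 : P 0 = 1)
    (hPrec : ∀ i, P (i + 1) = - ∑ m ∈ Finset.range (2 * dl 0 - 1),
      ((θ ^ q ^ (i + 1) - θ) ^ (m + 1))⁻¹ •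
        ∑ n ∈ Finset.range (m + 1), ((-1 : F) ^ n * (Nat.choose m n : F)) •
          (N ^ (m - n) * P i * (E.map fun z => z ^ q ^ i) * N ^ n))
    (x : ((l : Fin r) × Fin (dl l.val)) → F)
    (hx : ∀ (l : Fin r) (j : Fin (dl l.val)),
      ‖x ⟨l, j⟩‖ < (q : ℝ) ^ (-((dl l.val : ℝ) - ((j : ℕ) + 1)) +
        (dl l.val : ℝ) * q / ((q : ℝ) - 1))) :
    (∀ a : (l : Fin r) × Fin (dl l.val),
      Filter.Tendsto (fun i : ℕ => ‖((P i).mulVec fun b => x b ^ q ^ i) a‖)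
        Filter.atTop (nhds 0)) ∧
    (∀ a : (l : Fin r) × Fin (dl l.val),
      ∃ S : F, HasSum (fun i : ℕ => ((P i).mulVec fun b => x b ^ q ^ i) a) S) :=
  log_converges_on_polydisc_general F hna q hq θ hθ r s u hu dl hdl N E hN hE P hP0 hPrec x hx
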